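/- arXiv:1405.7867 — 3 statements merged into one kernel-verified Lean document; each statement's English description precedes it below -/
import Mathlib

section
/- Second moment formula for the lazy importance sampling weight with state-dependent continuation: E[W_lazy²] = ∫ (ξ(φ)/α(φ)) dG(φ), where ξ(φ) = E[L̂²·(π(θ)/g(θ))² | φ], provided α(φ) > 0 G-a.s. on {ξ(φ) > 0}. -/
open MeasureTheory ProbabilityTheory
open scoped ENNReal

/-!
Since `b / 0 = 0`, the weight is `W = 1_B · V / α(φ)` and `W² = 1_B · (V / α(φ))²`. The factor
`(V / α(φ))²` is `σ(φ, V)`-measurable, so conditioning on `σ(φ, V)` replaces `1_B` by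
`α(φ)` and leaves `V² / α(φ)`; the factor `1 / α(φ)` is `σ(φ)`-measurable, so conditioning on
`σ(φ)` replaces `V²` by `ξ(φ)`. Both steps are taken for lower Lebesgue integrals, where
pulling out a nonnegative measurable factor needs no integrability: the identity holds even
when both sides are infinite, and then both Bochner integrals are `0`.
-/

section

variable {Ω : Type*} {m m₁ m₂ m0 : MeasurableSpace Ω} {μ : Measure[m0] Ω}

theorem lintegral_mul_condLExp (hm : m ≤ m0) [SigmaFinite (μ.trim hm)]
    {g X : Ω → ℝ≥0∞} (hg : Measurable[m] g) (hX : AEMeasurable X μ) :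
    ∫⁻ ω, g ω * μ⁻[X|m] ω ∂μ = ∫⁻ ω, g ω * X ω ∂μ := by
  have hg₀ : Measurable g := hg.mono hm le_rfl
  -- `μ.withDensity μ⁻[X|m]` and `μ.withDensity X` agree on `m`, which is all `g` can see.
  have htrim : (μ.withDensity μ⁻[X|m]).trim hm = (μ.withDensity X).trim hm := by
    refine @Measure.ext Ω m _ _ fun s hs => ?_
    rw [trim_measurableSet_eq hm hs, trim_measurableSet_eq hm hs,
      withDensity_apply _ (hm _ hs), withDensity_apply _ (hm _ hs)]
    exact setLIntegral_condLExp hm μ X hs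
  calc ∫⁻ ω, g ω * μ⁻[X|m] ω ∂μ = ∫⁻ ω, (μ⁻[X|m] * g) ω ∂μ :=
        lintegral_congr fun ω => mul_comm _ _
    _ = ∫⁻ ω, g ω ∂(μ.withDensity μ⁻[X|m]) :=
        (lintegral_withDensity_eq_lintegral_mul₀ (measurable_condLExp' m μ X).aemeasurable
          hg₀.aemeasurable).symm
    _ = ∫⁻ ω, g ω ∂((μ.withDensity μ⁻[X|m]).trim hm) := (lintegral_trim hm hg).symm
    _ = ∫⁻ ω, g ω ∂((μ.withDensity X).trim hm) := by rw [htrim]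
    _ = ∫⁻ ω, g ω ∂(μ.withDensity X) := lintegral_trim hm hg
    _ = ∫⁻ ω, (X * g) ω ∂μ := lintegral_withDensity_eq_lintegral_mul₀ hX hg₀.aemeasurable
    _ = ∫⁻ ω, g ω * X ω ∂μ := lintegral_congr fun ω => mul_comm _ _

theorem lintegral_mul_ofReal_eq_of_condExp [IsFiniteMeasure μ] (hm : m ≤ m0)
    {g : Ω → ℝ≥0∞} (hg : Measurable[m] g) {f η : Ω → ℝ} (hf : Integrable f μ)
    (hf₀ : 0 ≤ᵐ[μ] f) (hη : μ[f|m] =ᵐ[μ] η) :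
    ∫⁻ ω, g ω * ENNReal.ofReal (f ω) ∂μ = ∫⁻ ω, g ω * ENNReal.ofReal (η ω) ∂μ := by
  rw [← lintegral_mul_condLExp hm hg hf.aemeasurable.ennreal_ofReal]
  refine lintegral_congr_ae ?_
  filter_upwards [condLExp_ofReal m hf hf₀, hη] with ω hω hηω
  rw [hω, hηω]

theorem lintegral_ofReal_sq_indicator_mul_div_eq [IsFiniteMeasure μ] (hm₂ : m₂ ≤ m0)
    {a V η : Ω → ℝ}
    (ha₁ : Measurable[m₁] a) (ha₂ : Measurable[m₂] a) (hV : Measurable[m₁] V)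
    (hV2 : Integrable (fun ω => V ω ^ 2) μ) {B : Set Ω} (hB : MeasurableSet B)
    (hBa : μ[B.indicator (fun _ => (1 : ℝ))|m₁] =ᵐ[μ] a)
    (hη : μ[fun ω => V ω ^ 2|m₂] =ᵐ[μ] η) :
    ∫⁻ ω, ENNReal.ofReal ((B.indicator (fun _ => (1 : ℝ)) ω * V ω / a ω) ^ 2) ∂μ
      = ∫⁻ ω, ENNReal.ofReal (η ω / a ω) ∂μ := by
  by_cases hm₁ : m₁ ≤ m0
  swap
  · -- junk value: `μ[·|m₁] = 0` unless `m₁ ≤ m0`, so then `a = 0` a.e. and both sides vanish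
    have ha : a =ᵐ[μ] 0 := by rw [condExp_of_not_le hm₁] at hBa; exact hBa.symm
    refine lintegral_congr_ae ?_
    filter_upwards [ha] with ω hω
    simp [hω]
  have hη₀ : 0 ≤ᵐ[μ] η := (condExp_nonneg (ae_of_all _ fun ω => sq_nonneg (V ω))).trans_eq hη
  calc ∫⁻ ω, ENNReal.ofReal ((B.indicator (fun _ => (1 : ℝ)) ω * V ω / a ω) ^ 2) ∂μ
      = ∫⁻ ω, ENNReal.ofReal ((V ω / a ω) ^ 2) *
          ENNReal.ofReal (B.indicator (fun _ => (1 : ℝ)) ω) ∂μ := by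
        refine lintegral_congr fun ω => ?_
        rw [← ENNReal.ofReal_mul (sq_nonneg _)]
        by_cases hω : ω ∈ B <;> simp [hω, div_pow]
    _ = ∫⁻ ω, ENNReal.ofReal ((V ω / a ω) ^ 2) * ENNReal.ofReal (a ω) ∂μ :=
        lintegral_mul_ofReal_eq_of_condExp hm₁ ((hV.div ha₁).pow_const 2).ennreal_ofReal
          ((integrable_const 1).indicator hB)
          (ae_of_all _ fun ω => Set.indicator_nonneg (fun _ _ => zero_le_one) ω) hBa
    _ = ∫⁻ ω, ENNReal.ofReal (a ω)⁻¹ * ENNReal.ofReal (V ω ^ 2) ∂μ := by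
        refine lintegral_congr fun ω => ?_
        rw [← ENNReal.ofReal_mul (sq_nonneg _), ← ENNReal.ofReal_mul' (sq_nonneg _)]
        rcases eq_or_ne (a ω) 0 with h | h
        · simp [h]
        · congr 1
          field_simp
    _ = ∫⁻ ω, ENNReal.ofReal (a ω)⁻¹ * ENNReal.ofReal (η ω) ∂μ :=
        lintegral_mul_ofReal_eq_of_condExp hm₂ ha₂.inv.ennreal_ofReal hV2
          (ae_of_all _ fun ω => sq_nonneg (V ω)) hη
    _ = ∫⁻ ω, ENNReal.ofReal (η ω / a ω) ∂μ := by
        refine lintegral_congr_ae ?_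
        filter_upwards [hη₀] with ω hω
        rw [← ENNReal.ofReal_mul' hω, inv_mul_eq_div]

end

theorem lazy_weight_second_moment_general
    {Ω Φ : Type*} [MeasurableSpace Ω] [MeasurableSpace Φ]
    (μ : Measure Ω) [IsProbabilityMeasure μ]
    (φ : Ω → Φ) (hφ : Measurable φ)
    (V : Ω → ℝ) (hV2 : MemLp V 2 μ)
    (α : Φ → ℝ) (hα_meas : Measurable α)
    (ξ : Φ → ℝ) (hξ_meas : Measurable ξ)
    (hξ : μ[fun ω => (V ω) ^ 2 | MeasurableSpace.comap φ inferInstance]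
      =ᵐ[μ] fun ω => ξ (φ ω))
    (B : Set Ω) (hB : MeasurableSet B)
    (hcond : μ[B.indicator (fun _ => (1 : ℝ)) |
        MeasurableSpace.comap (fun ω => (φ ω, V ω)) inferInstance]
      =ᵐ[μ] fun ω => α (φ ω)) :
    ∫ ω, (if α (φ ω) = 0 then 0
        else B.indicator (fun _ => (1 : ℝ)) ω * V ω / α (φ ω)) ^ 2 ∂μ
      = ∫ x, (if α x = 0 then 0 else ξ x / α x) ∂(Measure.map φ μ) := by
  have hdiv : ∀ a b : ℝ, (if a = 0 then 0 else b / a) = b / a := fun a b =>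
    ite_eq_right_iff.2 fun h => by rw [h, div_zero]
  simp only [hdiv]
  have hpair := comap_measurable (m := inferInstance) fun ω => (φ ω, V ω)
  have hα₀ : 0 ≤ᵐ[μ] fun ω => α (φ ω) :=
    (condExp_nonneg (ae_of_all _ fun ω => Set.indicator_nonneg (fun _ _ => zero_le_one) ω)).trans_eq
      hcond
  have hξ₀ : 0 ≤ᵐ[μ] fun ω => ξ (φ ω) :=
    (condExp_nonneg (ae_of_all _ fun ω => sq_nonneg (V ω))).trans_eq hξ
  have hmeas : AEStronglyMeasurable
      (fun ω => (B.indicator (fun _ => (1 : ℝ)) ω * V ω / α (φ ω)) ^ 2) μ :=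
    ((((measurable_const.indicator hB).aemeasurable.mul hV2.1.aemeasurable).div
      (hα_meas.comp hφ).aemeasurable).pow_const 2).aestronglyMeasurable
  rw [integral_map (f := fun x => ξ x / α x) hφ.aemeasurable
      (hξ_meas.div hα_meas).aestronglyMeasurable,
    integral_eq_lintegral_of_nonneg_ae (ae_of_all _ fun ω => sq_nonneg _) hmeas,
    integral_eq_lintegral_of_nonneg_ae (hξ₀.mp (hα₀.mono fun ω h₁ h₂ => div_nonneg h₂ h₁))
      ((hξ_meas.comp hφ).div (hα_meas.comp hφ)).aestronglyMeasurable,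
    lintegral_ofReal_sq_indicator_mul_div_eq (a := fun ω => α (φ ω)) (V := V) hφ.comap_le
      (hα_meas.comp (measurable_fst.comp hpair))
      (hα_meas.comp (comap_measurable (m := inferInstance) φ))
      (measurable_snd.comp hpair) hV2.integrable_sq hB hcond hξ]

/-- Second moment formula for the lazy importance sampling weight with
state-dependent continuation probability:
`E[W_lazy²] = ∫ ξ(φ)/α(φ) dG(φ)` where `ξ(φ) = E[V² | φ]`,
`V = L̂π(θ)/g(θ)`, `G` is the law of `φ`, and terms with `α(φ) = 0`
are interpreted as `0`. -/
theorem lazy_weight_second_moment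
    {Ω Φ : Type*} [MeasurableSpace Ω] [MeasurableSpace Φ]
    (μ : Measure Ω) [IsProbabilityMeasure μ]
    (φ : Ω → Φ) (hφ : Measurable φ)
    (V : Ω → ℝ) (hVnn : ∀ ω, 0 ≤ V ω) (hV2 : MemLp V 2 μ)
    (α : Φ → ℝ) (hα_meas : Measurable α) (hα01 : ∀ x, α x ∈ Set.Icc (0 : ℝ) 1)
    (ξ : Φ → ℝ) (hξ_meas : Measurable ξ)
    (hξ : μ[fun ω => (V ω) ^ 2 | MeasurableSpace.comap φ inferInstance]
      =ᵐ[μ] fun ω => ξ (φ ω))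
    (B : Set Ω) (hB : MeasurableSet B)
    (hcond : μ[B.indicator (fun _ => (1 : ℝ)) |
        MeasurableSpace.comap (fun ω => (φ ω, V ω)) inferInstance]
      =ᵐ[μ] fun ω => α (φ ω))
    (hguard : ∀ᵐ x ∂(Measure.map φ μ), α x = 0 → ξ x = 0) :
    ∫ ω, (if α (φ ω) = 0 then 0
        else B.indicator (fun _ => (1 : ℝ)) ω * V ω / α (φ ω)) ^ 2 ∂μ
      = ∫ x, (if α x = 0 then 0 else ξ x / α x) ∂(Measure.map φ μ) :=
  lazy_weight_second_moment_general μ φ hφ V hV2 α hα_meas ξ hξ_meas hξ B hB hcond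
end

section
/- Optimal importance density for random-weight importance sampling: among probability densities g with g > 0 on {π·γ > 0}, the product E_g[W²]·E_g[T] with W = L̂π(θ)/g(θ), γ(θ) = E[L̂²|θ], and E_g[T] = ∫ T̄(θ)g(θ)dθ, i.e. the product (∫ π(θ)²γ(θ)/g(θ) dθ)(∫ T̄(θ)g(θ) dθ), is minimized by g(θ) ∝ π(θ)√(γ(θ)/T̄(θ)), with minimum value (∫ π(θ)√(γ(θ)T̄(θ)) dθ)². -/
open MeasureTheory

/-! By Cauchy–Schwarz,
`(∫ π√(γT̄))² = (∫ √(π²γ/g) · √(T̄g))² ≤ (∫ π²γ/g)(∫ T̄g)`,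
with equality when `π²γ/g` and `T̄g` are proportional, i.e. for `g ∝ π√(γ/T̄)`. -/

theorem sq_integral_sqrt_mul_sqrt_le {α : Type*} [MeasurableSpace α] {μ : Measure α}
    {f g : α → ℝ} (hf₀ : 0 ≤ f) (hg₀ : 0 ≤ g) (hf : Integrable f μ) (hg : Integrable g μ) :
    (∫ x, √(f x) * √(g x) ∂μ) ^ 2 ≤ (∫ x, f x ∂μ) * ∫ x, g x ∂μ := by
  have memLp_sqrt : ∀ {h : α → ℝ}, 0 ≤ h → Integrable h μ →
      MemLp (fun x => √(h x)) (ENNReal.ofReal 2) μ := fun {h} h₀ hh => by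
    rw [ENNReal.ofReal_ofNat, memLp_two_iff_integrable_sq
      (Real.continuous_sqrt.comp_aestronglyMeasurable hh.aestronglyMeasurable)]
    simpa only [Real.sq_sqrt (h₀ _)] using hh
  have holder := integral_mul_le_Lp_mul_Lq_of_nonneg Real.HolderConjugate.two_two
    (.of_forall fun x => Real.sqrt_nonneg (f x)) (.of_forall fun x => Real.sqrt_nonneg (g x))
    (memLp_sqrt hf₀ hf) (memLp_sqrt hg₀ hg)
  simp only [Real.rpow_two, Real.sq_sqrt (hf₀ _), Real.sq_sqrt (hg₀ _),
    ← Real.sqrt_eq_rpow] at holder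
  calc (∫ x, √(f x) * √(g x) ∂μ) ^ 2
      ≤ (√(∫ x, f x ∂μ) * √(∫ x, g x ∂μ)) ^ 2 :=
        pow_le_pow_left₀ (integral_nonneg fun x => by positivity) holder 2
    _ = (∫ x, f x ∂μ) * ∫ x, g x ∂μ := by
        rw [mul_pow, Real.sq_sqrt (integral_nonneg hf₀), Real.sq_sqrt (integral_nonneg hg₀)]

theorem ite_eq_zero_zero_div {α : Type*} [GroupWithZero α] (x y : α) [Decidable (x = 0)] :
    (if x = 0 then 0 else y / x) = y / x :=
  ite_eq_right_iff.2 fun hx => by rw [hx, div_zero]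

theorem Real.mul_sqrt_div_eq_sqrt_mul {a t : ℝ} (ht : 0 ≤ t) : t * √(a / t) = √(a * t) := by
  rcases ht.eq_or_lt with rfl | ht
  · simp
  rw [show a * t = t ^ 2 * (a / t) by field_simp, Real.sqrt_mul (sq_nonneg t),
    Real.sqrt_sq ht.le]

theorem Real.sqrt_div_mul_sqrt_mul {a t : ℝ} (ha : 0 ≤ a) (ht : 0 < t) :
    √(a / t) * √(a * t) = a := by
  rw [← Real.sqrt_mul (div_nonneg ha ht.le), show a / t * (a * t) = a ^ 2 by field_simp,
    Real.sqrt_sq ha]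

theorem sq_mul_div_div_sqrt_div {p a t : ℝ} (c : ℝ) (ha : 0 ≤ a) (ht : 0 < t) :
    p ^ 2 * a / (p * √(a / t) / c) = c * (p * √(a * t)) := by
  rcases eq_or_ne p 0 with rfl | hp
  · simp
  rcases ha.eq_or_lt with rfl | ha
  · simp
  have : √(a / t) ≠ 0 := (Real.sqrt_pos.2 (div_pos ha ht)).ne'
  field_simp
  linear_combination -c * Real.sqrt_div_mul_sqrt_mul ha.le ht

theorem sqrt_sq_mul_div_mul_sqrt_mul {p a t x : ℝ} (hp : 0 ≤ p) (ha : 0 ≤ a) (hx : 0 ≤ x)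
    (hx_pos : 0 < p ^ 2 * a → 0 < x) :
    √(p ^ 2 * a / x) * √(t * x) = p * √(a * t) := by
  have hprod : p ^ 2 * a / x * (t * x) = p ^ 2 * (a * t) := by
    rcases hx.eq_or_lt with rfl | hx
    · have : p ^ 2 * a = 0 := le_antisymm (not_lt.1 fun h => (hx_pos h).ne' rfl) (by positivity)
      simp [← mul_assoc, this]
    · field_simp
  rw [← Real.sqrt_mul (by positivity), hprod, Real.sqrt_mul (sq_nonneg p), Real.sqrt_sq hp]

theorem optimal_importance_density_general
    {d : ℕ} (pi γ Tbar : (Fin d → ℝ) → ℝ)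
    (hpi_nn : ∀ θ, 0 ≤ pi θ) (hγ_pos : ∀ θ, 0 < γ θ) (hT_pos : ∀ θ, 0 < Tbar θ)
    (hc_pos : 0 < ∫ θ, pi θ * Real.sqrt (γ θ / Tbar θ)) :
    ((∫ θ, (if (pi θ * Real.sqrt (γ θ / Tbar θ)
              / ∫ θ', pi θ' * Real.sqrt (γ θ' / Tbar θ')) = 0 then 0
            else pi θ ^ 2 * γ θ
              / (pi θ * Real.sqrt (γ θ / Tbar θ)
                  / ∫ θ', pi θ' * Real.sqrt (γ θ' / Tbar θ'))))
          * (∫ θ, Tbar θ * (pi θ * Real.sqrt (γ θ / Tbar θ)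
              / ∫ θ', pi θ' * Real.sqrt (γ θ' / Tbar θ')))
        = (∫ θ, pi θ * Real.sqrt (γ θ * Tbar θ)) ^ 2)
      ∧ ∀ g : (Fin d → ℝ) → ℝ, Measurable g → (∀ θ, 0 ≤ g θ) →
          (∫ θ, g θ = 1) → (∀ θ, 0 < pi θ ^ 2 * γ θ → 0 < g θ) →
          Integrable (fun θ => if g θ = 0 then 0 else pi θ ^ 2 * γ θ / g θ) →
          Integrable (fun θ => Tbar θ * g θ) →
          (∫ θ, pi θ * Real.sqrt (γ θ * Tbar θ)) ^ 2
            ≤ (∫ θ, (if g θ = 0 then 0 else pi θ ^ 2 * γ θ / g θ))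
                * (∫ θ, Tbar θ * g θ) := by
  simp only [ite_eq_zero_zero_div]
  refine ⟨?_, fun g _ hg_nn _ hg_pos hcost hmean => ?_⟩
  · set c := ∫ θ, pi θ * √(γ θ / Tbar θ)
    simp only [sq_mul_div_div_sqrt_div c (hγ_pos _).le (hT_pos _), mul_div_assoc',
      Real.mul_sqrt_div_eq_sqrt_mul (hT_pos _).le, mul_left_comm (Tbar _)]
    rw [integral_const_mul, integral_div]
    field_simp
  · calc (∫ θ, pi θ * √(γ θ * Tbar θ)) ^ 2
        = (∫ θ, √(pi θ ^ 2 * γ θ / g θ) * √(Tbar θ * g θ)) ^ 2 := by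
          simp only [sqrt_sq_mul_div_mul_sqrt_mul (hpi_nn _) (hγ_pos _).le (hg_nn _) (hg_pos _)]
      _ ≤ _ := sq_integral_sqrt_mul_sqrt_le
          (fun θ => div_nonneg (mul_nonneg (sq_nonneg _) (hγ_pos θ).le) (hg_nn θ))
          (fun θ => mul_nonneg (hT_pos θ).le (hg_nn θ)) hcost hmean

/-- Optimal importance density for random-weight importance sampling
(Corollary 1 of the paper): the product
`J(g) = (∫ π²γ/g)(∫ T̄g)` over probability densities `g` (positive where
`π²γ > 0`) is minimized by `g ∝ π√(γ/T̄)`, with minimum value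
`(∫ π√(γT̄))²`. -/
theorem optimal_importance_density
    {d : ℕ} (pi γ Tbar : (Fin d → ℝ) → ℝ)
    (hpi_meas : Measurable pi) (hγ_meas : Measurable γ) (hT_meas : Measurable Tbar)
    (hpi_nn : ∀ θ, 0 ≤ pi θ) (hγ_pos : ∀ θ, 0 < γ θ) (hT_pos : ∀ θ, 0 < Tbar θ)
    (hpi_dens : ∫ θ, pi θ = 1)
    (hint1 : Integrable (fun θ => pi θ * Real.sqrt (γ θ * Tbar θ)))
    (hint2 : Integrable (fun θ => pi θ * Real.sqrt (γ θ / Tbar θ)))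
    (hc_pos : 0 < ∫ θ, pi θ * Real.sqrt (γ θ / Tbar θ)) :
    ((∫ θ, (if (pi θ * Real.sqrt (γ θ / Tbar θ)
              / ∫ θ', pi θ' * Real.sqrt (γ θ' / Tbar θ')) = 0 then 0
            else pi θ ^ 2 * γ θ
              / (pi θ * Real.sqrt (γ θ / Tbar θ)
                  / ∫ θ', pi θ' * Real.sqrt (γ θ' / Tbar θ'))))
          * (∫ θ, Tbar θ * (pi θ * Real.sqrt (γ θ / Tbar θ)
              / ∫ θ', pi θ' * Real.sqrt (γ θ' / Tbar θ')))
        = (∫ θ, pi θ * Real.sqrt (γ θ * Tbar θ)) ^ 2)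
      ∧ ∀ g : (Fin d → ℝ) → ℝ, Measurable g → (∀ θ, 0 ≤ g θ) →
          (∫ θ, g θ = 1) → (∀ θ, 0 < pi θ ^ 2 * γ θ → 0 < g θ) →
          Integrable (fun θ => if g θ = 0 then 0 else pi θ ^ 2 * γ θ / g θ) →
          Integrable (fun θ => Tbar θ * g θ) →
          (∫ θ, pi θ * Real.sqrt (γ θ * Tbar θ)) ^ 2
            ≤ (∫ θ, (if g θ = 0 then 0 else pi θ ^ 2 * γ θ / g θ))
                * (∫ θ, Tbar θ * g θ) :=
  optimal_importance_density_general pi γ Tbar hpi_nn hγ_pos hT_pos hc_pos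
end

section
/- Unbiasedness of multi-stage lazy estimator: under the multi-stage setup with P(Bᵢ | θ, X, B₁,…,B_{i−1}) = α⁽ⁱ⁾(φᵢ) > 0 and L̂ ≥ 0 integrable satisfying E[L̂ | θ] = L(θ), the estimator L̂_lazy = L̂·1_{∩Bᵢ}/∏ᵢα⁽ⁱ⁾(φᵢ) satisfies E[L̂_lazy | θ] = L(θ). -/
/-!
Put `wᵢ = 1_{Bᵢ} / α⁽ⁱ⁾(φᵢ)`. Since `E[1_{Bᵢ} | θ, X, B₁, …, B_{i-1}] = α⁽ⁱ⁾(φᵢ)`, multiplying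
by `wᵢ` leaves unchanged the integral of any function measurable with respect to that σ-algebra.
For `s ∈ σ(θ)` the function `1_s · L̂ · w₁ ⋯ w_{i-1}` is such a function, so the weights can be
removed one at a time starting from the last, and `∫_s L̂_lazy = ∫_s L̂`. Everything is nonnegative,
so the computation is done with lower Lebesgue integrals; integrability of `L̂_lazy` is the case
`s = Ω`.
-/

open MeasureTheory ProbabilityTheory
open scoped ENNReal

theorem ofReal_indicator_iInter_div_prod {Ω ι : Type*} [Fintype ι] {B : ι → Set Ω}
    {L : Ω → ℝ} {a : ι → Ω → ℝ} (ha : ∀ i ω, 0 < a i ω) (ω : Ω) :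
    ENNReal.ofReal ((⋂ i, B i).indicator (fun ω => L ω / ∏ i, a i ω) ω) =
      ENNReal.ofReal (L ω) * ∏ i, (B i).indicator (fun ω => (ENNReal.ofReal (a i ω))⁻¹) ω := by
  by_cases hω : ω ∈ ⋂ i, B i
  · have hωB : ∀ i, ω ∈ B i := Set.mem_iInter.mp hω
    simp only [Set.indicator_of_mem hω, Set.indicator_of_mem (hωB _)]
    rw [ENNReal.ofReal_div_of_pos (Finset.prod_pos fun i _ => ha i ω),
      ENNReal.ofReal_prod_of_nonneg fun i _ => (ha i ω).le, div_eq_mul_inv,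
      ENNReal.prod_inv_distrib fun i _ j _ _ => .inr ENNReal.ofReal_ne_top]
  · obtain ⟨i, hi⟩ : ∃ i, ω ∉ B i := by simpa using hω
    rw [Set.indicator_of_notMem hω, ENNReal.ofReal_zero,
      Finset.prod_eq_zero (Finset.mem_univ i) (Set.indicator_of_notMem hi _), mul_zero]

section Reweighting

variable {Ω : Type*} {m m0 : MeasurableSpace Ω} {μ : Measure[m0] Ω}

section CondExpIndicator

variable [IsFiniteMeasure μ] {B : Set Ω} {a : Ω → ℝ}

theorem measure_inter_eq_setLIntegral_of_condExp_indicator (hm : m ≤ m0) (hB : MeasurableSet B)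
    (ha : 0 ≤ᵐ[μ] a) (hcond : μ[B.indicator (fun _ => (1 : ℝ)) | m] =ᵐ[μ] a)
    {s : Set Ω} (hs : MeasurableSet[m] s) :
    μ (s ∩ B) = ∫⁻ ω in s, ENNReal.ofReal (a ω) ∂μ := by
  have hint : Integrable a μ := integrable_condExp.congr hcond
  rw [← ofReal_integral_eq_lintegral_ofReal hint.integrableOn (ae_restrict_of_ae ha),
    ← setIntegral_congr_ae (hm s hs) (hcond.mono fun _ h _ => h),
    setIntegral_condExp hm ((integrable_const 1).indicator hB) hs,
    setIntegral_indicator hB, setIntegral_const, smul_eq_mul, mul_one, ofReal_measureReal]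

theorem trim_restrict_eq_trim_withDensity_of_condExp_indicator (hm : m ≤ m0)
    (hB : MeasurableSet B) (ha : 0 ≤ᵐ[μ] a)
    (hcond : μ[B.indicator (fun _ => (1 : ℝ)) | m] =ᵐ[μ] a) :
    (μ.restrict B).trim hm = (μ.withDensity fun ω => ENNReal.ofReal (a ω)).trim hm := by
  refine @Measure.ext _ m _ _ fun s hs => ?_
  rw [trim_measurableSet_eq hm hs, trim_measurableSet_eq hm hs,
    Measure.restrict_apply (hm s hs), withDensity_apply _ (hm s hs)]
  exact measure_inter_eq_setLIntegral_of_condExp_indicator hm hB ha hcond hs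

theorem lintegral_mul_indicator_inv_eq_of_condExp_indicator (hm : m ≤ m0)
    (hB : MeasurableSet B) (ha : ∀ ω, 0 < a ω) (ha_meas : Measurable[m] a)
    (hcond : μ[B.indicator (fun _ => (1 : ℝ)) | m] =ᵐ[μ] a)
    {h : Ω → ℝ≥0∞} (hh : Measurable[m] h) :
    ∫⁻ ω, h ω * B.indicator (fun ω => (ENNReal.ofReal (a ω))⁻¹) ω ∂μ = ∫⁻ ω, h ω ∂μ := by
  set g : Ω → ℝ≥0∞ := fun ω => h ω * (ENNReal.ofReal (a ω))⁻¹
  have hg : Measurable[m] g := hh.mul (ENNReal.measurable_ofReal.comp ha_meas).inv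
  have hdens := trim_restrict_eq_trim_withDensity_of_condExp_indicator hm hB
    (.of_forall fun ω => (ha ω).le) hcond
  calc ∫⁻ ω, h ω * B.indicator (fun ω => (ENNReal.ofReal (a ω))⁻¹) ω ∂μ
      = ∫⁻ ω, B.indicator g ω ∂μ := by
        congr 1 with ω
        by_cases hω : ω ∈ B <;> simp [g, hω]
    _ = ∫⁻ ω, g ω ∂(μ.restrict B).trim hm := by
        rw [lintegral_indicator hB, lintegral_trim hm hg]
    _ = ∫⁻ ω, ENNReal.ofReal (a ω) * g ω ∂μ := by
        rw [hdens, lintegral_trim hm hg]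
        exact lintegral_withDensity_eq_lintegral_mul _
          (ENNReal.measurable_ofReal.comp (ha_meas.mono hm le_rfl)) (hg.mono hm le_rfl)
    _ = ∫⁻ ω, h ω ∂μ := by
        congr 1 with ω
        rw [mul_left_comm, ENNReal.mul_inv_cancel (ENNReal.ofReal_pos.mpr (ha ω)).ne'
          ENNReal.ofReal_ne_top, mul_one]

end CondExpIndicator

theorem lintegral_mul_prod_eq_lintegral :
    ∀ {n : ℕ} (mStage : Fin n → MeasurableSpace Ω) (w : Fin n → Ω → ℝ≥0∞) (g : Ω → ℝ≥0∞),
      (∀ i h, Measurable[mStage i] h → ∫⁻ ω, h ω * w i ω ∂μ = ∫⁻ ω, h ω ∂μ) →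
      (∀ i j, j < i → Measurable[mStage i] (w j)) → (∀ i, Measurable[mStage i] g) →
      ∫⁻ ω, g ω * ∏ i, w i ω ∂μ = ∫⁻ ω, g ω ∂μ
  | 0, _, _, _, _, _, _ => by simp
  | n + 1, mStage, w, g, hw, hw_stage, hg => by
    have hlast : Measurable[mStage (Fin.last n)] fun ω => g ω * ∏ j : Fin n, w j.castSucc ω :=
      (hg _).mul <| Finset.measurable_prod _ fun j _ => hw_stage _ _ j.castSucc_lt_last
    calc ∫⁻ ω, g ω * ∏ i, w i ω ∂μ
        = ∫⁻ ω, (g ω * ∏ j : Fin n, w j.castSucc ω) * w (Fin.last n) ω ∂μ := by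
          simp only [Fin.prod_univ_castSucc, mul_assoc]
      _ = ∫⁻ ω, g ω * ∏ j : Fin n, w j.castSucc ω ∂μ := hw _ _ hlast
      _ = ∫⁻ ω, g ω ∂μ :=
          lintegral_mul_prod_eq_lintegral (fun j => mStage j.castSucc) (fun j => w j.castSucc) g
            (fun i => hw _) (fun i j hji => hw_stage _ _ (Fin.castSucc_lt_castSucc_iff.mpr hji))
            (fun i => hg _)

theorem condExp_ae_eq_condExp_of_forall_setLIntegral_ofReal_eq [IsFiniteMeasure μ]
    (hm : m ≤ m0) {f g : Ω → ℝ} (hf : AEStronglyMeasurable f μ) (hf0 : 0 ≤ᵐ[μ] f)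
    (hg0 : 0 ≤ᵐ[μ] g) (hg : Integrable g μ)
    (hfg : ∀ s, MeasurableSet[m] s →
      ∫⁻ ω in s, ENNReal.ofReal (f ω) ∂μ = ∫⁻ ω in s, ENNReal.ofReal (g ω) ∂μ) :
    μ[f | m] =ᵐ[μ] μ[g | m] := by
  have hf_int : Integrable f μ := by
    refine ⟨hf, (hasFiniteIntegral_iff_ofReal hf0).mpr ?_⟩
    have huniv := hfg _ MeasurableSet.univ
    rw [setLIntegral_univ, setLIntegral_univ] at huniv
    exact huniv ▸ (hasFiniteIntegral_iff_ofReal hg0).mp hg.2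
  have hset (s : Set Ω) (hs : MeasurableSet[m] s) : ∫ ω in s, f ω ∂μ = ∫ ω in s, g ω ∂μ := by
    rw [integral_eq_lintegral_of_nonneg_ae (ae_restrict_of_ae hf0) hf.restrict,
      integral_eq_lintegral_of_nonneg_ae (ae_restrict_of_ae hg0) hg.1.restrict, hfg s hs]
  refine (ae_eq_condExp_of_forall_setIntegral_eq hm hf_int
    (fun s _ _ => integrable_condExp.integrableOn) (fun s hs _ => ?_)
    stronglyMeasurable_condExp.aestronglyMeasurable).symm
  rw [setIntegral_condExp hm hg hs, hset s hs]

theorem condExp_indicator_iInter_div_prod_ae_eq_condExp [IsFiniteMeasure μ] {n : ℕ}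
    (mStage : Fin n → MeasurableSpace Ω) (hm : m ≤ m0) (hm_stage : ∀ i, m ≤ mStage i)
    (hstage : ∀ i, mStage i ≤ m0) {B : Fin n → Set Ω} (hB : ∀ i, MeasurableSet (B i))
    (hB_stage : ∀ i j, j < i → MeasurableSet[mStage i] (B j))
    {a : Fin n → Ω → ℝ} (ha : ∀ i ω, 0 < a i ω)
    (ha_stage : ∀ i j, j ≤ i → Measurable[mStage i] (a j))
    (hcond : ∀ i, μ[(B i).indicator (fun _ => (1 : ℝ)) | mStage i] =ᵐ[μ] a i)
    {L : Ω → ℝ} (hL_stage : ∀ i, Measurable[mStage i] L) (hL0 : ∀ ω, 0 ≤ L ω)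
    (hL_int : Integrable L μ) :
    μ[(⋂ i, B i).indicator (fun ω => L ω / ∏ i, a i ω) | m] =ᵐ[μ] μ[L | m] := by
  set w : Fin n → Ω → ℝ≥0∞ := fun i => (B i).indicator fun ω => (ENNReal.ofReal (a i ω))⁻¹
  have hw (i : Fin n) (h : Ω → ℝ≥0∞) (hh : Measurable[mStage i] h) :
      ∫⁻ ω, h ω * w i ω ∂μ = ∫⁻ ω, h ω ∂μ :=
    lintegral_mul_indicator_inv_eq_of_condExp_indicator (hstage i) (hB i) (ha i)
      (ha_stage i i le_rfl) (hcond i) hh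
  have hw_stage (i j : Fin n) (hji : j < i) : Measurable[mStage i] (w j) :=
    (ENNReal.measurable_ofReal.comp (ha_stage i j hji.le)).inv.indicator (hB_stage i j hji)
  have ha_meas (j : Fin n) : Measurable (a j) := (ha_stage j j le_rfl).mono (hstage j) le_rfl
  have hprod_meas : Measurable fun ω => ∏ i, a i ω := Finset.measurable_prod _ fun i _ => ha_meas i
  refine condExp_ae_eq_condExp_of_forall_setLIntegral_ofReal_eq hm
    ((hL_int.1.aemeasurable.div hprod_meas.aemeasurable).indicator
      (.iInter hB)).aestronglyMeasurable
    (.of_forall <| Set.indicator_nonneg fun ω _ =>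
      div_nonneg (hL0 ω) (Finset.prod_nonneg fun i _ => (ha i ω).le))
    (.of_forall hL0) hL_int fun s hs => ?_
  rw [← lintegral_indicator (hm s hs), ← lintegral_indicator (hm s hs)]
  refine (lintegral_congr fun ω => ?_).trans
    (lintegral_mul_prod_eq_lintegral mStage w _ hw hw_stage fun i =>
      (ENNReal.measurable_ofReal.comp (hL_stage i)).indicator (hm_stage i s hs))
  by_cases hω : ω ∈ s
  · rw [Set.indicator_of_mem hω, Set.indicator_of_mem hω]
    exact ofReal_indicator_iInter_div_prod ha ω
  · rw [Set.indicator_of_notMem hω, Set.indicator_of_notMem hω, zero_mul]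

end Reweighting

/-- Unbiasedness of the multi-stage lazy estimator: with conditionally
independent continuation decisions `Bᵢ` of strictly positive probabilities
`a i (θ, X)`, and `L̂ ≥ 0` an integrable function of `(θ, X)`, the estimator
`L̂·1_{⋂Bᵢ}/∏ a i (θ, X)` has the same conditional expectation given `θ`
as `L̂`, i.e. `E[L̂_lazy | θ] = L(θ)`. -/
theorem multistage_lazy_unbiased
    {Ω Θ E : Type*} [MeasurableSpace Ω] [MeasurableSpace Θ] [MeasurableSpace E]
    (μ : Measure Ω) [IsProbabilityMeasure μ]
    (θf : Ω → Θ) (hθ : Measurable θf) (Xf : Ω → E) (hX : Measurable Xf)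
    (n : ℕ) (a : Fin n → Θ × E → ℝ) (ha_meas : ∀ i, Measurable (a i))
    (ha01 : ∀ i z, a i z ∈ Set.Ioc (0 : ℝ) 1)
    (B : Fin n → Set Ω) (hB : ∀ i, MeasurableSet (B i))
    (hcond : ∀ i : Fin n,
      μ[(B i).indicator (fun _ => (1 : ℝ)) |
          MeasurableSpace.comap (fun ω => (θf ω, Xf ω)) inferInstance
            ⊔ MeasurableSpace.generateFrom {t | ∃ j : Fin n, j < i ∧ t = B j}]
        =ᵐ[μ] fun ω => a i (θf ω, Xf ω))
    (Lhat : Θ × E → ℝ) (hL_meas : Measurable Lhat) (hLnn : ∀ z, 0 ≤ Lhat z)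
    (hLint : Integrable (fun ω => Lhat (θf ω, Xf ω)) μ) :
    μ[fun ω => (⋂ i, B i).indicator
          (fun ω' => Lhat (θf ω', Xf ω') / ∏ i, a i (θf ω', Xf ω')) ω |
        MeasurableSpace.comap θf inferInstance]
      =ᵐ[μ] μ[fun ω => Lhat (θf ω, Xf ω) |
        MeasurableSpace.comap θf inferInstance] := by
  set π : Ω → Θ × E := fun ω => (θf ω, Xf ω)
  set mStage : Fin n → MeasurableSpace Ω := fun i =>
    MeasurableSpace.comap π inferInstance ⊔
      MeasurableSpace.generateFrom {t | ∃ j, j < i ∧ t = B j}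
  have hπ_stage (i : Fin n) : Measurable[mStage i] π :=
    (comap_measurable π).mono le_sup_left le_rfl
  have hstage (i : Fin n) : mStage i ≤ ‹MeasurableSpace Ω› :=
    sup_le (hθ.prodMk hX).comap_le
      (MeasurableSpace.generateFrom_le (by rintro t ⟨j, -, rfl⟩; exact hB j))
  have hB_stage (i j : Fin n) (hji : j < i) : MeasurableSet[mStage i] (B j) :=
    le_sup_right (a := MeasurableSpace.comap π inferInstance) _
      (MeasurableSpace.measurableSet_generateFrom ⟨j, hji, rfl⟩)
  exact condExp_indicator_iInter_div_prod_ae_eq_condExp mStage hθ.comap_le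
    (fun i => (measurable_fst.comp (hπ_stage i)).comap_le) hstage hB hB_stage
    (fun i ω => (ha01 i (π ω)).1) (fun i j _ => (ha_meas j).comp (hπ_stage i)) hcond
    (fun i => hL_meas.comp (hπ_stage i)) (fun ω => hLnn (π ω)) hLint
end
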